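/- Let θ ∈ (0, π/2), λ ∈ Σ_θ with |λ| = 1, and let δ_{jk} denote the Kronecker delta. For 1 ≤ j, k ≤ d define m_{jk}(ξ) = (λ + |ξ|²)^{-1}(δ_{jk} − ξ_j ξ_k / |ξ|²) for ξ ∈ ℝ^d \ {0}. Then for every multi-index α with |α| ≤ ⌊d/2⌋ + 1, there is a constant M = M(d, θ, α) such that |ξ|^{|α|} |D^α m_{jk}(ξ)| ≤ M for all ξ ≠ 0. -/

import Mathlib

noncomputable section

noncomputable def dirDeriv {d : ℕ} (i : Fin d) (f : EuclideanSpace ℝ (Fin d) → ℂ) :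
    EuclideanSpace ℝ (Fin d) → ℂ :=
  fun x => fderiv ℝ f x (EuclideanSpace.single i 1)

/-- iterated partial derivative `D^α` encoded by a list of coordinate directions. -/
noncomputable def multiDeriv {d : ℕ} (L : List (Fin d)) (f : EuclideanSpace ℝ (Fin d) → ℂ) :
    EuclideanSpace ℝ (Fin d) → ℂ :=
  L.foldr dirDeriv f

/-!
Away from the origin, every derivative `D^α m_{jk}` is a linear combination of terms
`ξ^β |ξ|^{-2a} (λ + |ξ|²)^{-b}` with `b ≥ 1` and `|β| + |α| + 2 = 2a + 2b`: a partial derivative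
either removes one factor of `ξ^β` or multiplies the term by `ξ_i |ξ|^{-2}` or
`ξ_i (λ + |ξ|²)^{-1}`, and each of these raises the order of decay by one. For `λ` in the
sector and `s ≥ 0`,
`|λ + s|² ≥ 1 - 2s cos θ + s² = (s - cos θ)² + sin² θ = (1 - s cos θ)² + s² sin² θ`,
so `|λ + s| ≥ sin θ · max(1, s)`; since `|ξ|^{|α|+|β|-2a} = |ξ|^{2(b-1)}`, every such term is
then at most `(sin θ)^{-b} |ξ|^{-|α|}`.
-/

open Real in
theorem sin_mul_max_le_norm_add_ofReal {z : ℂ} {θ s : ℝ} (hθ : 0 ≤ θ)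
    (harg : |z.arg| ≤ π - θ) (hs : 0 ≤ s) :
    sin θ * max ‖z‖ s ≤ ‖z + s‖ := by
  have hcos : -cos θ ≤ cos z.arg := by
    rw [← Real.cos_abs z.arg, ← Real.cos_pi_sub]
    exact Real.cos_le_cos_of_nonneg_of_le_pi (abs_nonneg _) (by linarith) harg
  have hre : -(‖z‖ * cos θ) ≤ z.re := by
    rw [← Complex.norm_mul_cos_arg]; nlinarith [norm_nonneg z]
  have hnorm : ‖z + s‖ ^ 2 = ‖z‖ ^ 2 + 2 * s * z.re + s ^ 2 := by
    simp only [Complex.sq_norm, Complex.normSq_apply, Complex.add_re, Complex.add_im,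
      Complex.ofReal_re, Complex.ofReal_im]
    ring
  have hsq : (sin θ * max ‖z‖ s) ^ 2 ≤ ‖z + s‖ ^ 2 := by
    have hpyth := sin_sq_add_cos_sq θ
    rw [hnorm]
    rcases max_cases ‖z‖ s with ⟨hmax, -⟩ | ⟨hmax, -⟩ <;> rw [hmax]
    · nlinarith [sq_nonneg (s - ‖z‖ * cos θ)]
    · nlinarith [sq_nonneg (‖z‖ - s * cos θ)]
  exact le_of_pow_le_pow_left₀ two_ne_zero (norm_nonneg _) hsq

def resolventRadial (lam : ℂ) (a b : ℕ) (z : ℂ) : ℂ := z⁻¹ ^ a * (lam + z)⁻¹ ^ b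

theorem hasDerivAt_resolventRadial {lam z : ℂ} (a b : ℕ) (hz : z ≠ 0) (hw : lam + z ≠ 0) :
    HasDerivAt (resolventRadial lam a b)
      (-a * resolventRadial lam (a + 1) b z - b * resolventRadial lam a (b + 1) z) z := by
  refine HasDerivAt.congr_deriv ((((hasDerivAt_id' z).fun_inv hz).fun_pow a).fun_mul
    ((((hasDerivAt_id' z).const_add lam).fun_inv hw).fun_pow b)) ?_
  rcases a with _ | a <;> rcases b with _ | b <;>
  · simp only [resolventRadial, Nat.add_sub_cancel, div_eq_mul_inv, ← inv_pow]
    push_cast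
    ring

section Calculus

variable {d : ℕ} {f g : EuclideanSpace ℝ (Fin d) → ℂ} {ξ : EuclideanSpace ℝ (Fin d)}

theorem HasFDerivAt.dirDeriv_eq {f' : EuclideanSpace ℝ (Fin d) →L[ℝ] ℂ}
    (h : HasFDerivAt f f' ξ) (i : Fin d) : dirDeriv i f ξ = f' (EuclideanSpace.single i 1) := by
  rw [dirDeriv, h.fderiv]

theorem dirDeriv_add (hf : DifferentiableAt ℝ f ξ) (hg : DifferentiableAt ℝ g ξ) (i : Fin d) :
    dirDeriv i (fun x => f x + g x) ξ = dirDeriv i f ξ + dirDeriv i g ξ :=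
  (hf.hasFDerivAt.add hg.hasFDerivAt).dirDeriv_eq i

theorem dirDeriv_const_mul (hf : DifferentiableAt ℝ f ξ) (c : ℂ) (i : Fin d) :
    dirDeriv i (fun x => c * f x) ξ = c * dirDeriv i f ξ := by
  rw [(hf.hasFDerivAt.const_mul c).dirDeriv_eq i]
  rfl

theorem dirDeriv_coord_mul (hf : DifferentiableAt ℝ f ξ) (i j : Fin d) :
    dirDeriv i (fun x => (x j : ℂ) * f x) ξ =
      (if j = i then 1 else 0) * f ξ + (ξ j : ℂ) * dirDeriv i f ξ := by
  have hcoord : HasFDerivAt (fun x : EuclideanSpace ℝ (Fin d) => (x j : ℂ))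
      (Complex.ofRealCLM.comp (EuclideanSpace.proj j)) ξ :=
    (Complex.ofRealCLM.comp (EuclideanSpace.proj j)).hasFDerivAt
  rw [(hcoord.fun_mul hf.hasFDerivAt).dirDeriv_eq i]
  by_cases hji : j = i <;> simp [dirDeriv, hji, mul_comm, add_comm]

theorem dirDeriv_congr_of_ne_zero (hfg : ∀ x, x ≠ 0 → f x = g x) (hξ : ξ ≠ 0) (i : Fin d) :
    dirDeriv i f ξ = dirDeriv i g ξ := by
  have : f =ᶠ[nhds ξ] g := Filter.eventuallyEq_of_mem (isOpen_compl_singleton.mem_nhds hξ) hfg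
  rw [dirDeriv, dirDeriv, this.fderiv_eq]

theorem ofReal_norm_sq_ne_zero (hξ : ξ ≠ 0) : ((‖ξ‖ ^ 2 : ℝ) : ℂ) ≠ 0 := by
  exact_mod_cast (pow_pos (norm_pos_iff.2 hξ) 2).ne'

theorem hasFDerivAt_ofReal_norm_sq (ξ : EuclideanSpace ℝ (Fin d)) :
    HasFDerivAt (fun x : EuclideanSpace ℝ (Fin d) => ((‖x‖ ^ 2 : ℝ) : ℂ))
      (Complex.ofRealCLM.comp (2 • innerSL ℝ ξ)) ξ :=
  Complex.ofRealCLM.hasFDerivAt.comp ξ (hasStrictFDerivAt_norm_sq ξ).hasFDerivAt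

theorem dirDeriv_resolventRadial_sqNorm {lam : ℂ} (a b : ℕ) (hξ : ξ ≠ 0)
    (hres : lam + (‖ξ‖ ^ 2 : ℝ) ≠ 0) (i : Fin d) :
    dirDeriv i (fun x => resolventRadial lam a b (‖x‖ ^ 2 : ℝ)) ξ =
      -2 * a * ξ i * resolventRadial lam (a + 1) b (‖ξ‖ ^ 2 : ℝ)
        - 2 * b * ξ i * resolventRadial lam a (b + 1) (‖ξ‖ ^ 2 : ℝ) := by
  refine (((hasDerivAt_resolventRadial a b (ofReal_norm_sq_ne_zero hξ) hres).comp_hasFDerivAt ξ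
    (hasFDerivAt_ofReal_norm_sq ξ)).dirDeriv_eq i).trans ?_
  simp only [ContinuousLinearMap.comp_apply, smul_apply,
    Complex.ofRealCLM_apply, coe_innerSL_apply, EuclideanSpace.inner_single_right, conj_trivial,
    one_mul, nsmul_eq_mul, smul_eq_mul]
  push_cast
  ring

end Calculus

section Symbols

variable {d : ℕ} {lam : ℂ}

def coordMonomial (β : List (Fin d)) (ξ : EuclideanSpace ℝ (Fin d)) : ℂ :=
  (β.map fun i => (ξ i : ℂ)).prod

def resolventTerm (lam : ℂ) (β : List (Fin d)) (a b : ℕ) (ξ : EuclideanSpace ℝ (Fin d)) : ℂ :=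
  coordMonomial β ξ * resolventRadial lam a b (‖ξ‖ ^ 2 : ℝ)

theorem resolventTerm_nil (a b : ℕ) :
    resolventTerm lam ([] : List (Fin d)) a b =
      fun ξ => resolventRadial lam a b (‖ξ‖ ^ 2 : ℝ) := by
  ext ξ
  simp [resolventTerm, coordMonomial]

theorem resolventTerm_cons (j : Fin d) (β : List (Fin d)) (a b : ℕ) :
    resolventTerm lam (j :: β) a b = fun ξ => (ξ j : ℂ) * resolventTerm lam β a b ξ := by
  ext ξ
  simp [resolventTerm, coordMonomial, mul_assoc]

theorem differentiableAt_resolventTerm (β : List (Fin d)) (a b : ℕ)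
    {ξ : EuclideanSpace ℝ (Fin d)} (hξ : ξ ≠ 0) (hres : lam + (‖ξ‖ ^ 2 : ℝ) ≠ 0) :
    DifferentiableAt ℝ (resolventTerm lam β a b) ξ := by
  induction β with
  | nil =>
    rw [resolventTerm_nil]
    exact ((hasDerivAt_resolventRadial a b (ofReal_norm_sq_ne_zero hξ) hres).comp_hasFDerivAt ξ
      (hasFDerivAt_ofReal_norm_sq ξ)).differentiableAt
  | cons j β ih =>
    rw [resolventTerm_cons]
    exact (Complex.ofRealCLM.comp (EuclideanSpace.proj j)).differentiableAt.mul ih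

/-- Off the origin, a `ℂ`-linear combination of terms `ξ^β |ξ|^{-2a} (λ + |ξ|²)^{-b}` with
`b ≥ 1` and `|β| + n + 2 = 2a + 2b`. -/
inductive IsResolventSymbol (lam : ℂ) : ℕ → (EuclideanSpace ℝ (Fin d) → ℂ) → Prop
  | term {n : ℕ} {β : List (Fin d)} {a b : ℕ} (hb : 1 ≤ b)
      (hdeg : β.length + n + 2 = 2 * a + 2 * b) :
      IsResolventSymbol lam n (resolventTerm lam β a b)
  | zero (n : ℕ) : IsResolventSymbol lam n fun _ => 0
  | add {n : ℕ} {f g : EuclideanSpace ℝ (Fin d) → ℂ} :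
      IsResolventSymbol lam n f → IsResolventSymbol lam n g →
        IsResolventSymbol lam n fun ξ => f ξ + g ξ
  | const_mul {n : ℕ} {f : EuclideanSpace ℝ (Fin d) → ℂ} (c : ℂ) :
      IsResolventSymbol lam n f → IsResolventSymbol lam n fun ξ => c * f ξ
  | congr {n : ℕ} {f g : EuclideanSpace ℝ (Fin d) → ℂ} :
      IsResolventSymbol lam n f → (∀ ξ, ξ ≠ 0 → f ξ = g ξ) → IsResolventSymbol lam n g

namespace IsResolventSymbol

variable {n : ℕ} {f : EuclideanSpace ℝ (Fin d) → ℂ}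

theorem coord_mul (hf : IsResolventSymbol lam (n + 1) f) (j : Fin d) :
    IsResolventSymbol lam n fun ξ => (ξ j : ℂ) * f ξ := by
  generalize hm : n + 1 = m at hf
  induction hf generalizing n with
  | term hb hdeg =>
    rw [← resolventTerm_cons]
    exact term hb (by simp only [List.length_cons]; omega)
  | zero => exact (zero n).congr fun ξ _ => (mul_zero _).symm
  | add _ _ ihf ihg => exact (add (ihf hm) (ihg hm)).congr fun ξ _ => (mul_add _ _ _).symm
  | const_mul c _ ih => exact (const_mul c (ih hm)).congr fun ξ _ => by ring
  | congr _ hfg ih => exact (ih hm).congr fun ξ hξ => by rw [hfg ξ hξ]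

theorem differentiableAt (hres : ∀ s : ℝ, 0 < s → lam + s ≠ 0) (hf : IsResolventSymbol lam n f)
    {ξ : EuclideanSpace ℝ (Fin d)} (hξ : ξ ≠ 0) : DifferentiableAt ℝ f ξ := by
  induction hf with
  | term => exact differentiableAt_resolventTerm _ _ _ hξ (hres _ (by positivity))
  | zero => exact differentiableAt_const 0
  | add _ _ ihf ihg => exact ihf.add ihg
  | const_mul c _ ih => exact ih.const_mul c
  | congr _ hfg ih =>
    exact ih.congr_of_eventuallyEq
      (Filter.eventuallyEq_of_mem (isOpen_compl_singleton.mem_nhds hξ) hfg).symm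

end IsResolventSymbol

theorem isResolventSymbol_dirDeriv_resolventTerm (hres : ∀ s : ℝ, 0 < s → lam + s ≠ 0)
    (i : Fin d) (β : List (Fin d)) {n a b : ℕ} (hb : 1 ≤ b)
    (hdeg : β.length + n + 2 = 2 * a + 2 * b) :
    IsResolventSymbol lam (n + 1) (dirDeriv i (resolventTerm lam β a b)) := by
  induction β generalizing n with
  | nil =>
    have hnormTerm : IsResolventSymbol lam (n + 1) (resolventTerm lam [i] (a + 1) b) :=
      .term hb (by simp only [List.length_cons, List.length_nil] at hdeg ⊢; omega)
    have hresTerm : IsResolventSymbol lam (n + 1) (resolventTerm lam [i] a (b + 1)) :=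
      .term (by omega) (by simp only [List.length_cons, List.length_nil] at hdeg ⊢; omega)
    refine (IsResolventSymbol.add (.const_mul (-2 * a) hnormTerm)
      (.const_mul (-2 * b) hresTerm)).congr fun ξ hξ => ?_
    rw [resolventTerm_nil, dirDeriv_resolventRadial_sqNorm a b hξ (hres _ (by positivity)),
      resolventTerm_cons, resolventTerm_cons, resolventTerm_nil, resolventTerm_nil]
    ring
  | cons j β ih =>
    simp only [List.length_cons] at hdeg
    have hβ : IsResolventSymbol lam (n + 1) (resolventTerm lam β a b) := .term hb (by omega)
    refine (IsResolventSymbol.add (.const_mul (if j = i then 1 else 0) hβ)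
      ((ih (by omega)).coord_mul j)).congr fun ξ hξ => ?_
    rw [resolventTerm_cons, dirDeriv_coord_mul
      (differentiableAt_resolventTerm β a b hξ (hres _ (by positivity)))]

theorem isResolventSymbol_dirDeriv (hres : ∀ s : ℝ, 0 < s → lam + s ≠ 0) {n : ℕ}
    {f : EuclideanSpace ℝ (Fin d) → ℂ} (hf : IsResolventSymbol lam n f) (i : Fin d) :
    IsResolventSymbol lam (n + 1) (dirDeriv i f) := by
  induction hf with
  | term hb hdeg => exact isResolventSymbol_dirDeriv_resolventTerm hres i _ hb hdeg
  | zero => exact (IsResolventSymbol.zero _).congr fun ξ _ => by simp [dirDeriv]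
  | add hf hg ihf ihg =>
    exact (IsResolventSymbol.add ihf ihg).congr fun ξ hξ =>
      (dirDeriv_add (hf.differentiableAt hres hξ) (hg.differentiableAt hres hξ) i).symm
  | const_mul c hf ih =>
    exact (IsResolventSymbol.const_mul c ih).congr fun ξ hξ =>
      (dirDeriv_const_mul (hf.differentiableAt hres hξ) c i).symm
  | congr _ hfg ih => exact ih.congr fun ξ hξ => dirDeriv_congr_of_ne_zero hfg hξ i

theorem isResolventSymbol_multiDeriv (hres : ∀ s : ℝ, 0 < s → lam + s ≠ 0) {n : ℕ}
    {f : EuclideanSpace ℝ (Fin d) → ℂ} (hf : IsResolventSymbol lam n f) (L : List (Fin d)) :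
    IsResolventSymbol lam (n + L.length) (multiDeriv L f) := by
  induction L with
  | nil => exact hf
  | cons i L ih => exact isResolventSymbol_dirDeriv hres ih i

theorem norm_coordMonomial_le (β : List (Fin d)) (ξ : EuclideanSpace ℝ (Fin d)) :
    ‖coordMonomial β ξ‖ ≤ ‖ξ‖ ^ β.length := by
  induction β with
  | nil => simp [coordMonomial]
  | cons j β ih =>
    rw [coordMonomial, List.map_cons, List.prod_cons, norm_mul, Complex.norm_real,
      List.length_cons, pow_succ']
    exact mul_le_mul (PiLp.norm_apply_le ξ j) ih (norm_nonneg _) (norm_nonneg _)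

theorem norm_resolventTerm_le {c : ℝ} (hc : 0 < c)
    (hlam : ∀ s : ℝ, 0 ≤ s → c * max 1 s ≤ ‖lam + s‖) {n a b : ℕ} {β : List (Fin d)}
    (hb : 1 ≤ b) (hdeg : β.length + n + 2 = 2 * a + 2 * b) {ξ : EuclideanSpace ℝ (Fin d)}
    (hξ : ξ ≠ 0) : ‖ξ‖ ^ n * ‖resolventTerm lam β a b ξ‖ ≤ c⁻¹ ^ b := by
  obtain ⟨b, rfl⟩ := Nat.exists_eq_add_of_le' hb
  have hnorm : ‖resolventTerm lam β a (b + 1) ξ‖ =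
      ‖coordMonomial β ξ‖ * (((‖ξ‖ ^ 2)⁻¹) ^ a * ‖lam + ((‖ξ‖ ^ 2 : ℝ) : ℂ)‖⁻¹ ^ (b + 1)) := by
    rw [resolventTerm, resolventRadial, norm_mul, norm_mul, norm_pow, norm_pow, norm_inv,
      norm_inv, Complex.norm_real, Real.norm_of_nonneg (by positivity)]
  have hmono := norm_coordMonomial_le β ξ
  have hw1 := (le_mul_of_one_le_right hc.le (le_max_left _ _)).trans
    (hlam (‖ξ‖ ^ 2) (by positivity))
  have hw2 := (mul_le_mul_of_nonneg_left (le_max_right _ _) hc.le).trans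
    (hlam (‖ξ‖ ^ 2) (by positivity))
  have hr : 0 < ‖ξ‖ := norm_pos_iff.2 hξ
  rw [hnorm]
  set r := ‖ξ‖
  set w := ‖lam + ((r ^ 2 : ℝ) : ℂ)‖
  have hw : 0 < w := hc.trans_le hw1
  have hpow : r ^ n * r ^ β.length = (r ^ 2) ^ a * (r ^ 2) ^ b := by
    rw [← pow_add, ← pow_mul, ← pow_mul, ← pow_add]
    congr 1
    omega
  calc r ^ n * (‖coordMonomial β ξ‖ * (((r ^ 2)⁻¹) ^ a * w⁻¹ ^ (b + 1)))
      ≤ r ^ n * (r ^ β.length * (((r ^ 2)⁻¹) ^ a * w⁻¹ ^ (b + 1))) := by gcongr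
    _ = ((r ^ 2) ^ a * ((r ^ 2)⁻¹) ^ a) * ((r ^ 2) ^ b * w⁻¹ ^ b) * w⁻¹ := by
        rw [← mul_assoc, hpow]
        ring
    _ = (r ^ 2 / w) ^ b * w⁻¹ := by
        rw [← mul_pow, mul_inv_cancel₀ (by positivity), one_pow, one_mul, div_eq_mul_inv, mul_pow]
    _ ≤ c⁻¹ ^ b * c⁻¹ := by
        gcongr
        rw [div_le_iff₀ hw, inv_mul_eq_div, le_div_iff₀ hc]
        linarith
    _ = c⁻¹ ^ (b + 1) := (pow_succ _ _).symm

theorem IsResolventSymbol.exists_bound {c : ℝ} (hc : 0 < c)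
    (hlam : ∀ s : ℝ, 0 ≤ s → c * max 1 s ≤ ‖lam + s‖) {n : ℕ}
    {f : EuclideanSpace ℝ (Fin d) → ℂ} (hf : IsResolventSymbol lam n f) :
    ∃ M, ∀ ξ, ξ ≠ 0 → ‖ξ‖ ^ n * ‖f ξ‖ ≤ M := by
  induction hf with
  | term hb hdeg => exact ⟨_, fun ξ hξ => norm_resolventTerm_le hc hlam hb hdeg hξ⟩
  | zero => exact ⟨0, by simp⟩
  | add _ _ ihf ihg =>
    obtain ⟨M₁, hM₁⟩ := ihf
    obtain ⟨M₂, hM₂⟩ := ihg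
    refine ⟨M₁ + M₂, fun ξ hξ => ?_⟩
    refine (mul_le_mul_of_nonneg_left (norm_add_le _ _) (by positivity)).trans ?_
    rw [mul_add]
    exact add_le_add (hM₁ ξ hξ) (hM₂ ξ hξ)
  | const_mul c _ ih =>
    obtain ⟨M, hM⟩ := ih
    refine ⟨‖c‖ * M, fun ξ hξ => ?_⟩
    rw [norm_mul, mul_left_comm]
    exact mul_le_mul_of_nonneg_left (hM ξ hξ) (norm_nonneg c)
  | congr _ hfg ih =>
    obtain ⟨M, hM⟩ := ih
    exact ⟨M, fun ξ hξ => hfg ξ hξ ▸ hM ξ hξ⟩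

theorem isResolventSymbol_stokes (j k : Fin d) :
    IsResolventSymbol lam 0 fun ξ => (lam + (‖ξ‖ : ℂ) ^ 2)⁻¹ *
      ((if j = k then 1 else 0) - ((ξ j : ℂ) * (ξ k : ℂ)) / (‖ξ‖ : ℂ) ^ 2) := by
  have hdiag : IsResolventSymbol lam 0 (resolventTerm lam ([] : List (Fin d)) 0 1) :=
    .term le_rfl rfl
  have hproj : IsResolventSymbol lam 0 (resolventTerm lam [j, k] 1 1) := .term le_rfl rfl
  refine (IsResolventSymbol.add (.const_mul (if j = k then 1 else 0) hdiag)
    (.const_mul (-1) hproj)).congr fun ξ _ => ?_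
  simp only [resolventTerm, coordMonomial, resolventRadial, List.map_cons, List.map_nil,
    List.prod_cons, List.prod_nil]
  push_cast
  ring

end Symbols

theorem stmt1_general (d : ℕ) (θ : ℝ) (hθ : θ ∈ Set.Ioo 0 (Real.pi / 2)) (lam : ℂ)
    (harg : |lam.arg| < Real.pi - θ) (h1 : ‖lam‖ = 1)
    (j k : Fin d) (L : List (Fin d)) :
    ∃ M : ℝ, ∀ ξ : EuclideanSpace ℝ (Fin d), ξ ≠ 0 →
      ‖ξ‖ ^ L.length * ‖(multiDeriv L
        (fun ξ => (lam + (‖ξ‖ : ℂ) ^ 2)⁻¹ *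
          ((if j = k then 1 else 0) - ((ξ j : ℂ) * (ξ k : ℂ)) / (‖ξ‖ : ℂ) ^ 2)) ξ)‖ ≤ M := by
  have hsin : 0 < Real.sin θ :=
    Real.sin_pos_of_pos_of_lt_pi hθ.1 (by linarith [hθ.2, Real.pi_pos])
  have hsector : ∀ s : ℝ, 0 ≤ s → Real.sin θ * max 1 s ≤ ‖lam + s‖ := fun s hs =>
    h1 ▸ sin_mul_max_le_norm_add_ofReal hθ.1.le harg.le hs
  have hres : ∀ s : ℝ, 0 < s → lam + s ≠ 0 := fun s hs h0 => by
    have := hsector s hs.le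
    rw [h0, norm_zero] at this
    nlinarith [le_max_left 1 s]
  simpa using (isResolventSymbol_multiDeriv hres (isResolventSymbol_stokes j k) L).exists_bound
    hsin hsector

/-- Mikhlin bounds for the Stokes resolvent multiplier
`m_{jk}(ξ) = (λ + |ξ|²)⁻¹ (δ_{jk} - ξ_j ξ_k /|ξ|²)` with `λ ∈ Σ_θ`, `|λ| = 1`:
for every multi-index (list of directions) of length `≤ ⌊d/2⌋ + 1`,
`|ξ|^{|α|} |D^α m_{jk}(ξ)| ≤ M(d, θ, α)` for all `ξ ≠ 0`. -/
theorem stmt1 (d : ℕ) (θ : ℝ) (hθ : θ ∈ Set.Ioo 0 (Real.pi / 2)) (lam : ℂ)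
    (hlam0 : lam ≠ 0) (harg : |lam.arg| < Real.pi - θ) (h1 : ‖lam‖ = 1)
    (j k : Fin d) (L : List (Fin d)) (hL : L.length ≤ d / 2 + 1) :
    ∃ M : ℝ, ∀ ξ : EuclideanSpace ℝ (Fin d), ξ ≠ 0 →
      ‖ξ‖ ^ L.length * ‖(multiDeriv L
        (fun ξ => (lam + (‖ξ‖ : ℂ) ^ 2)⁻¹ *
          ((if j = k then 1 else 0) - ((ξ j : ℂ) * (ξ k : ℂ)) / (‖ξ‖ : ℂ) ^ 2)) ξ)‖ ≤ M :=
  stmt1_general d θ hθ lam harg h1 j k L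
end
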